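/- arXiv:2009.13504 — 3 statements merged into one kernel-verified Lean document; each statement's English description precedes it below -/
import Mathlib

section
/- Let (X, A, Y) be jointly distributed random variables where A and Y take values in {0,1} and X takes values in a measurable space, with 0 < Pr(A = 0) < 1. Let D_a denote the conditional distribution of X given A = a for a ∈ {0,1}. Let g be a measurable map from the X-space into a normed space Z with ∥g(x)∥ ≤ R almost surely, let C > 0, and let h : Z → ℝ be C-Lipschitz with h(g(X)) ∈ {0,1} almost surely. Define δ := | Pr(Y = 1 | A = 0) − Pr(Y = 1 | A = 1) | and the group-conditional misclassification errors ε_a := Pr( h(g(X)) ≠ Y | A = a ) for a ∈ {0,1}. Then ε_0 + ε_1 ≥ δ − C · W1(g♯D_0, g♯D_1) ≥ δ − 2RC · Adv(F), where F is the class of all measurable functions f : Z → {0,1} and Adv(F) is the adversarial advantage computed with respect to the pushforward measures g♯D_0 and g♯D_1. -/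
open MeasureTheory ProbabilityTheory
open scoped NNReal

/-- The Wasserstein-1 distance between two measures on a (pseudo)metric space,
via its Kantorovich dual formulation:
`W1(μ, ν) = sup over 1-Lipschitz φ : Ω → ℝ of |∫ φ dμ - ∫ φ dν|`. -/
noncomputable def W1 {Ω : Type*} [MeasurableSpace Ω] [PseudoMetricSpace Ω]
    (μ ν : Measure Ω) : ℝ :=
  ⨆ φ : {φ : Ω → ℝ // LipschitzWith 1 φ}, |∫ z, φ.1 z ∂μ - ∫ z, φ.1 z ∂ν|

/-- The adversarial advantage of the class of all measurable binary predictors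
`f : Z → {0,1}` with respect to the measures `μ0, μ1`:
`Adv = sup_f |μ1(f = 1) - μ0(f = 1)|`. -/
noncomputable def advAll {Z : Type*} [MeasurableSpace Z] (μ0 μ1 : Measure Z) : ℝ :=
  ⨆ f : {f : Z → Bool // Measurable f},
    |(μ1 {z | f.1 z = true}).toReal - (μ0 {z | f.1 z = true}).toReal|

/-! Since the label and the prediction `h (g X)` are both `{0,1}`-valued, the gap between their
conditional means given `A = a` is at most the error `ε_a`; by the triangle inequality
`δ ≤ ε₀ + ε₁ + |∫ h d(g♯D₀) - ∫ h d(g♯D₁)|`, and the last term is at most `C · W1` because `h / C`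
is 1-Lipschitz. A 1-Lipschitz `φ` maps the ball of radius `R` into an interval of length `2R`; on
it the layer-cake formula `∫ f dν = ∫₀^{2R} ν {t < f} dt` turns `∫ φ dν₀ - ∫ φ dν₁` into an
average over `t` of `ν₀ {t < f} - ν₁ {t < f}`, each bounded by the advantage of the test
`f > t`. -/

open Set

section Advantage

variable {Z : Type*} [MeasurableSpace Z] {ν ν0 ν1 : Measure Z}

theorem bddAbove_advAll [IsFiniteMeasure ν0] [IsFiniteMeasure ν1] :
    BddAbove (range fun f : {f : Z → Bool // Measurable f} =>
      |(ν1 {z | f.1 z = true}).toReal - (ν0 {z | f.1 z = true}).toReal|) := by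
  refine ⟨ν1.real univ + ν0.real univ, forall_mem_range.2 fun f => ?_⟩
  calc _ ≤ |ν1.real {z | f.1 z = true}| + |ν0.real {z | f.1 z = true}| := abs_sub _ _
    _ ≤ ν1.real univ + ν0.real univ := by
      rw [abs_of_nonneg measureReal_nonneg, abs_of_nonneg measureReal_nonneg]
      exact add_le_add (measureReal_mono (subset_univ _)) (measureReal_mono (subset_univ _))

theorem abs_measureReal_sub_le_advAll [IsFiniteMeasure ν0] [IsFiniteMeasure ν1] {S : Set Z}
    (hS : MeasurableSet S) : |ν0.real S - ν1.real S| ≤ advAll ν0 ν1 := by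
  classical
  have key := le_ciSup (bddAbove_advAll (ν0 := ν0) (ν1 := ν1))
    ⟨fun z => decide (z ∈ S), measurable_to_bool (by simpa [preimage] using hS)⟩
  rw [abs_sub_comm]
  simpa [advAll, Measure.real] using key

theorem integrableOn_Ioc_measureReal_lt [IsFiniteMeasure ν] (f : Z → ℝ) (M : ℝ) :
    IntegrableOn (fun t => ν.real {z | t < f z}) (Ioc 0 M) := by
  have hanti : Antitone fun t => ν.real {z | t < f z} :=
    fun s t hst => measureReal_mono fun z hz => hst.trans_lt hz
  refine Integrable.of_bound hanti.measurable.aestronglyMeasurable (ν.real univ)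
    (ae_of_all _ fun t => ?_)
  rw [Real.norm_of_nonneg measureReal_nonneg]
  exact measureReal_mono (subset_univ _)

theorem integral_eq_setIntegral_Ioc_measureReal_lt [IsFiniteMeasure ν] {f : Z → ℝ} {M : ℝ}
    (hf : AEStronglyMeasurable f ν) (hfM : ∀ᵐ z ∂ν, f z ∈ Icc 0 M) :
    ∫ z, f z ∂ν = ∫ t in Ioc 0 M, ν.real {z | t < f z} := by
  have hint : Integrable f ν := .of_bound hf M (by
    filter_upwards [hfM] with z hz
    rw [Real.norm_of_nonneg hz.1]
    exact hz.2)
  rw [hint.integral_eq_integral_meas_lt (hfM.mono fun z hz => hz.1)]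
  refine setIntegral_eq_of_subset_of_forall_sdiff_eq_zero measurableSet_Ioi Ioc_subset_Ioi_self ?_
  rintro t ⟨ht0, htM⟩
  have hMt : M < t := by simpa [mem_Ioi.1 ht0] using htM
  have hnull : ν {z | t < f z} = 0 :=
    measure_mono_null (fun z (hz : t < f z) (hzM : f z ∈ Icc 0 M) =>
      (hzM.2.trans_lt hMt).not_ge hz.le) (ae_iff.1 hfM)
  simp [Measure.real, hnull]

theorem abs_integral_sub_le_mul_advAll_of_nonneg [IsFiniteMeasure ν0] [IsFiniteMeasure ν1]
    {f : Z → ℝ} {M : ℝ} (hf : Measurable f) (hM : 0 ≤ M)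
    (h0 : ∀ᵐ z ∂ν0, f z ∈ Icc 0 M) (h1 : ∀ᵐ z ∂ν1, f z ∈ Icc 0 M) :
    |∫ z, f z ∂ν0 - ∫ z, f z ∂ν1| ≤ M * advAll ν0 ν1 := by
  rw [integral_eq_setIntegral_Ioc_measureReal_lt hf.aestronglyMeasurable h0,
    integral_eq_setIntegral_Ioc_measureReal_lt hf.aestronglyMeasurable h1,
    ← integral_sub (integrableOn_Ioc_measureReal_lt f M) (integrableOn_Ioc_measureReal_lt f M)]
  refine (norm_setIntegral_le_of_norm_le_const
    (f := fun t => ν0.real {z | t < f z} - ν1.real {z | t < f z}) measure_Ioc_lt_top fun t _ =>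
      abs_measureReal_sub_le_advAll (measurableSet_lt measurable_const hf)).trans_eq ?_
  rw [Real.volume_real_Ioc_of_le hM, sub_zero, mul_comm]

theorem abs_integral_sub_le_mul_advAll [IsProbabilityMeasure ν0] [IsProbabilityMeasure ν1]
    {f : Z → ℝ} {a b : ℝ} (hf : Measurable f)
    (h0 : ∀ᵐ z ∂ν0, f z ∈ Icc a b) (h1 : ∀ᵐ z ∂ν1, f z ∈ Icc a b) :
    |∫ z, f z ∂ν0 - ∫ z, f z ∂ν1| ≤ (b - a) * advAll ν0 ν1 := by
  have hab : a ≤ b := let ⟨_, hz⟩ := h0.exists; hz.1.trans hz.2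
  have hshift : ∀ ν : Measure Z, (∀ᵐ z ∂ν, f z ∈ Icc a b) → ∀ᵐ z ∂ν, f z - a ∈ Icc 0 (b - a) :=
    fun ν h => h.mono fun z hz => ⟨sub_nonneg.2 hz.1, sub_le_sub_right hz.2 a⟩
  have hint : ∀ ν : Measure Z, [IsProbabilityMeasure ν] → (∀ᵐ z ∂ν, f z ∈ Icc a b) →
      Integrable f ν := fun ν _ h => .of_bound hf.aestronglyMeasurable (max |a| |b|)
        (h.mono fun z hz => abs_le_max_abs_abs hz.1 hz.2)
  have key := abs_integral_sub_le_mul_advAll_of_nonneg (hf.sub_const a)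
    (sub_nonneg.2 hab) (hshift ν0 h0) (hshift ν1 h1)
  rwa [integral_sub (hint ν0 h0) (integrable_const a),
    integral_sub (hint ν1 h1) (integrable_const a),
    integral_const, integral_const, probReal_univ, probReal_univ, sub_sub_sub_cancel_right] at key

end Advantage

section Wasserstein

variable {Z : Type*} [PseudoMetricSpace Z] [MeasurableSpace Z] [OpensMeasurableSpace Z]
  {ν0 ν1 : Measure Z} [IsProbabilityMeasure ν0] [IsProbabilityMeasure ν1] {z₀ : Z} {R : ℝ}

theorem LipschitzWith.abs_integral_sub_le_two_mul_advAll {φ : Z → ℝ} (hφ : LipschitzWith 1 φ)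
    (h0 : ∀ᵐ z ∂ν0, dist z z₀ ≤ R) (h1 : ∀ᵐ z ∂ν1, dist z z₀ ≤ R) :
    |∫ z, φ z ∂ν0 - ∫ z, φ z ∂ν1| ≤ 2 * R * advAll ν0 ν1 := by
  have hIcc (z : Z) (hz : dist z z₀ ≤ R) : φ z ∈ Icc (φ z₀ - R) (φ z₀ + R) := by
    have hdist : |φ z - φ z₀| ≤ R := by
      simpa [Real.dist_eq] using (hφ.dist_le_mul z z₀).trans (by simpa using hz)
    rw [abs_le] at hdist
    constructor <;> linarith
  have key := abs_integral_sub_le_mul_advAll hφ.continuous.measurable (h0.mono hIcc) (h1.mono hIcc)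
  rwa [add_sub_sub_cancel, ← two_mul] at key

theorem bddAbove_W1 (h0 : ∀ᵐ z ∂ν0, dist z z₀ ≤ R) (h1 : ∀ᵐ z ∂ν1, dist z z₀ ≤ R) :
    BddAbove (range fun φ : {φ : Z → ℝ // LipschitzWith 1 φ} =>
      |∫ z, φ.1 z ∂ν0 - ∫ z, φ.1 z ∂ν1|) :=
  ⟨2 * R * advAll ν0 ν1, forall_mem_range.2 fun φ => φ.2.abs_integral_sub_le_two_mul_advAll h0 h1⟩

theorem W1_le_two_mul_advAll (h0 : ∀ᵐ z ∂ν0, dist z z₀ ≤ R) (h1 : ∀ᵐ z ∂ν1, dist z z₀ ≤ R) :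
    W1 ν0 ν1 ≤ 2 * R * advAll ν0 ν1 :=
  have : Nonempty {φ : Z → ℝ // LipschitzWith 1 φ} := ⟨⟨fun _ => 0, LipschitzWith.const' 0⟩⟩
  ciSup_le fun φ => φ.2.abs_integral_sub_le_two_mul_advAll h0 h1

theorem LipschitzWith.abs_integral_sub_le_mul_W1 {K : ℝ≥0} {h : Z → ℝ} (hh : LipschitzWith K h)
    (h0 : ∀ᵐ z ∂ν0, dist z z₀ ≤ R) (h1 : ∀ᵐ z ∂ν1, dist z z₀ ≤ R) :
    |∫ z, h z ∂ν0 - ∫ z, h z ∂ν1| ≤ K * W1 ν0 ν1 := by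
  rcases eq_or_ne K 0 with rfl | hK
  · have hconst (z : Z) : h z = h z₀ := by simpa using hh.dist_le_mul z z₀
    simp [hconst]
  · have hφ : LipschitzWith 1 fun z => (K : ℝ)⁻¹ * h z := by
      simpa [hK, Function.comp_def] using (lipschitzWith_smul (K : ℝ)⁻¹).comp hh
    have key := le_ciSup (bddAbove_W1 h0 h1) ⟨_, hφ⟩
    rwa [integral_const_mul, integral_const_mul, ← mul_sub, abs_mul, abs_inv, NNReal.abs_eq,
      inv_mul_le_iff₀ (by positivity)] at key

end Wasserstein

section SampleSpace

variable {Ω : Type*} [MeasurableSpace Ω] {μ : Measure Ω}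

theorem abs_integral_sub_le_measureReal_ne [IsFiniteMeasure μ] {u v : Ω → ℝ}
    (hu : Measurable u) (hv : Measurable v)
    (hu01 : ∀ᵐ ω ∂μ, u ω ∈ Icc 0 1) (hv01 : ∀ᵐ ω ∂μ, v ω ∈ Icc 0 1) :
    |∫ ω, u ω ∂μ - ∫ ω, v ω ∂μ| ≤ μ.real {ω | u ω ≠ v ω} := by
  have hint (w : Ω → ℝ) (hw : Measurable w) (hw01 : ∀ᵐ ω ∂μ, w ω ∈ Icc 0 1) : Integrable w μ :=
    .of_bound hw.aestronglyMeasurable 1 (hw01.mono fun ω hω => by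
      rw [Real.norm_of_nonneg hω.1]
      exact hω.2)
  have hS : MeasurableSet {ω | u ω ≠ v ω} := (measurableSet_eq_fun hu hv).compl
  rw [← integral_sub (hint u hu hu01) (hint v hv hv01), ← integral_indicator_one hS]
  refine abs_integral_le_integral_abs.trans (integral_mono_ae
    ((hint u hu hu01).sub (hint v hv hv01)).abs ((integrable_const 1).indicator hS) ?_)
  filter_upwards [hu01, hv01] with ω ⟨hu0, hu1⟩ ⟨hv0, hv1⟩
  by_cases huv : u ω = v ω
  · simp [huv]
  · rw [indicator_of_mem huv, Pi.one_apply, abs_le]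
    constructor <;> linarith

theorem integral_ite_eq_measureReal {Y : Ω → Bool} (hY : Measurable Y) :
    ∫ ω, (if Y ω then (1 : ℝ) else 0) ∂μ = μ.real (Y ⁻¹' {true}) := by
  rw [← integral_indicator_one (hY (measurableSet_singleton true))]
  congr 1 with ω
  by_cases hω : Y ω <;> simp [hω]

theorem ae_map_dist_le {Z : Type*} [PseudoMetricSpace Z] [MeasurableSpace Z]
    [OpensMeasurableSpace Z] {W : Ω → Z} (hW : AEMeasurable W μ) {z₀ : Z} {R : ℝ}
    (hWR : ∀ᵐ ω ∂μ, dist (W ω) z₀ ≤ R) : ∀ᵐ z ∂μ.map W, dist z z₀ ≤ R :=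
  (ae_map_iff hW measurableSet_closedBall).2 hWR

theorem measure_preimage_true_ne_zero [IsProbabilityMeasure μ] {A : Ω → Bool}
    (hA : μ (A ⁻¹' {false}) < 1) : μ (A ⁻¹' {true}) ≠ 0 := by
  intro hnull
  have hcompl : A ⁻¹' {true} = (A ⁻¹' {false})ᶜ := by ext ω; simp
  have hsplit := measure_univ_le_add_compl (μ := μ) (A ⁻¹' {false})
  rw [← hcompl, hnull, add_zero, measure_univ] at hsplit
  exact hA.not_ge hsplit

end SampleSpace

theorem abs_integral_sub_le_measureReal_ne_add_mul_W1 {Ω Z : Type*} [MeasurableSpace Ω]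
    [PseudoMetricSpace Z] [MeasurableSpace Z] [OpensMeasurableSpace Z]
    {μ0 μ1 : Measure Ω} [IsProbabilityMeasure μ0] [IsProbabilityMeasure μ1]
    {W : Ω → Z} (hW : Measurable W) {z₀ : Z} {R : ℝ}
    (hW0 : ∀ᵐ z ∂μ0.map W, dist z z₀ ≤ R) (hW1 : ∀ᵐ z ∂μ1.map W, dist z z₀ ≤ R)
    {K : ℝ≥0} {h : Z → ℝ} (hh : LipschitzWith K h)
    (hh0 : ∀ᵐ ω ∂μ0, h (W ω) ∈ Icc 0 1) (hh1 : ∀ᵐ ω ∂μ1, h (W ω) ∈ Icc 0 1)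
    {v : Ω → ℝ} (hv : Measurable v)
    (hv0 : ∀ᵐ ω ∂μ0, v ω ∈ Icc 0 1) (hv1 : ∀ᵐ ω ∂μ1, v ω ∈ Icc 0 1) :
    |∫ ω, v ω ∂μ0 - ∫ ω, v ω ∂μ1| ≤
      μ0.real {ω | h (W ω) ≠ v ω} + μ1.real {ω | h (W ω) ≠ v ω} +
        K * W1 (μ0.map W) (μ1.map W) := by
  have : IsProbabilityMeasure (μ0.map W) := Measure.isProbabilityMeasure_map hW.aemeasurable
  have : IsProbabilityMeasure (μ1.map W) := Measure.isProbabilityMeasure_map hW.aemeasurable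
  have hhW : Measurable fun ω => h (W ω) := hh.continuous.measurable.comp hW
  have herr0 := abs_integral_sub_le_measureReal_ne hhW hv hh0 hv0
  have herr1 := abs_integral_sub_le_measureReal_ne hhW hv hh1 hv1
  have htransport := hh.abs_integral_sub_le_mul_W1 hW0 hW1
  rw [integral_map hW.aemeasurable hh.continuous.aestronglyMeasurable,
    integral_map hW.aemeasurable hh.continuous.aestronglyMeasurable] at htransport
  rw [abs_le] at herr0 herr1 htransport ⊢
  constructor <;> linarith

theorem tradeoff_lower_bound_general {Ω 𝒳 Z : Type*} [MeasurableSpace Ω] [MeasurableSpace 𝒳]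
    [NormedAddCommGroup Z] [MeasurableSpace Z] [BorelSpace Z]
    (P : Measure Ω) [IsProbabilityMeasure P]
    (X : Ω → 𝒳) (A : Ω → Bool) (Y : Ω → Bool)
    (hX : Measurable X) (hY : Measurable Y)
    (hA0 : 0 < P (A ⁻¹' {false})) (hA1 : P (A ⁻¹' {false}) < 1)
    (g : 𝒳 → Z) (hg : Measurable g) (R : ℝ)
    (hR : ∀ᵐ ω ∂P, ‖g (X ω)‖ ≤ R)
    (C : ℝ≥0) (h : Z → ℝ) (hh : LipschitzWith C h)
    (hh01 : ∀ᵐ ω ∂P, h (g (X ω)) = 0 ∨ h (g (X ω)) = 1) :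
    ((P[|A ⁻¹' {false}]) {ω | h (g (X ω)) ≠ (if Y ω then (1 : ℝ) else 0)}).toReal +
      ((P[|A ⁻¹' {true}]) {ω | h (g (X ω)) ≠ (if Y ω then (1 : ℝ) else 0)}).toReal ≥
      |((P[|A ⁻¹' {false}]) (Y ⁻¹' {true})).toReal -
        ((P[|A ⁻¹' {true}]) (Y ⁻¹' {true})).toReal| -
        (C : ℝ) * W1 (((P[|A ⁻¹' {false}]).map X).map g) (((P[|A ⁻¹' {true}]).map X).map g)
    ∧
    |((P[|A ⁻¹' {false}]) (Y ⁻¹' {true})).toReal -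
        ((P[|A ⁻¹' {true}]) (Y ⁻¹' {true})).toReal| -
        (C : ℝ) * W1 (((P[|A ⁻¹' {false}]).map X).map g) (((P[|A ⁻¹' {true}]).map X).map g) ≥
      |((P[|A ⁻¹' {false}]) (Y ⁻¹' {true})).toReal -
        ((P[|A ⁻¹' {true}]) (Y ⁻¹' {true})).toReal| -
        2 * R * (C : ℝ) *
          advAll (((P[|A ⁻¹' {false}]).map X).map g) (((P[|A ⁻¹' {true}]).map X).map g) := by
  set μ0 := P[|A ⁻¹' {false}]
  set μ1 := P[|A ⁻¹' {true}]
  have : IsProbabilityMeasure μ0 := cond_isProbabilityMeasure hA0.ne'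
  have : IsProbabilityMeasure μ1 := cond_isProbabilityMeasure (measure_preimage_true_ne_zero hA1)
  have : IsProbabilityMeasure (μ0.map (g ∘ X)) :=
    Measure.isProbabilityMeasure_map (hg.comp hX).aemeasurable
  have : IsProbabilityMeasure (μ1.map (g ∘ X)) :=
    Measure.isProbabilityMeasure_map (hg.comp hX).aemeasurable
  have hbound (μ : Measure Ω) (hμ : μ ≪ P) : ∀ᵐ z ∂μ.map (g ∘ X), dist z 0 ≤ R :=
    ae_map_dist_le (hg.comp hX).aemeasurable
      (hμ.ae_le (by simpa using hR : ∀ᵐ ω ∂P, dist (g (X ω)) 0 ≤ R))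
  have hbin : ∀ᵐ ω ∂P, h (g (X ω)) ∈ Icc 0 1 := hh01.mono fun ω hω => by
    rcases hω with hω | hω <;> simp [hω]
  have hlabel (ω : Ω) : (if Y ω then (1 : ℝ) else 0) ∈ Icc 0 1 := by split_ifs <;> simp
  have key := abs_integral_sub_le_measureReal_ne_add_mul_W1 (hg.comp hX)
    (hbound μ0 cond_absolutelyContinuous) (hbound μ1 cond_absolutelyContinuous) hh
    (cond_absolutelyContinuous.ae_le hbin) (cond_absolutelyContinuous.ae_le hbin)
    (v := fun ω => if Y ω then 1 else 0)
    (Measurable.ite (hY (measurableSet_singleton true)) measurable_const measurable_const)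
    (ae_of_all _ hlabel) (ae_of_all _ hlabel)
  rw [integral_ite_eq_measureReal hY, integral_ite_eq_measureReal hY] at key
  have hW1 := W1_le_two_mul_advAll (hbound μ0 cond_absolutelyContinuous)
    (hbound μ1 cond_absolutelyContinuous)
  rw [Measure.map_map hg hX, Measure.map_map hg hX]
  refine ⟨sub_le_iff_le_add.2 key, ?_⟩
  linarith [mul_le_mul_of_nonneg_left hW1 C.coe_nonneg]

/-- Trade-off between accuracy and information obfuscation
(Theorem 3.2 of the paper). Let `(X, A, Y)` be jointly distributed with `A, Y`
binary and `0 < Pr(A = 0) < 1`; let `D_a` be the conditional law of `X` given `A = a`;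
let `g` be a measurable encoder into a normed space with `‖g(X)‖ ≤ R` a.s., and
`h` a `C`-Lipschitz predictor with `h(g(X)) ∈ {0,1}` a.s. With
`δ = |Pr(Y = 1 | A = 0) - Pr(Y = 1 | A = 1)|` and group errors
`ε_a = Pr(h(g(X)) ≠ Y | A = a)`, we have
`ε_0 + ε_1 ≥ δ - C·W1(g♯D_0, g♯D_1) ≥ δ - 2RC·Adv(F_A)`. -/
theorem tradeoff_lower_bound {Ω 𝒳 Z : Type*} [MeasurableSpace Ω] [MeasurableSpace 𝒳]
    [NormedAddCommGroup Z] [MeasurableSpace Z] [BorelSpace Z]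
    (P : Measure Ω) [IsProbabilityMeasure P]
    (X : Ω → 𝒳) (A : Ω → Bool) (Y : Ω → Bool)
    (hX : Measurable X) (hA : Measurable A) (hY : Measurable Y)
    (hA0 : 0 < P (A ⁻¹' {false})) (hA1 : P (A ⁻¹' {false}) < 1)
    (g : 𝒳 → Z) (hg : Measurable g) (R : ℝ)
    (hR : ∀ᵐ ω ∂P, ‖g (X ω)‖ ≤ R)
    (C : ℝ≥0) (hC : 0 < C) (h : Z → ℝ) (hh : LipschitzWith C h)
    (hh01 : ∀ᵐ ω ∂P, h (g (X ω)) = 0 ∨ h (g (X ω)) = 1) :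
    ((P[|A ⁻¹' {false}]) {ω | h (g (X ω)) ≠ (if Y ω then (1 : ℝ) else 0)}).toReal +
      ((P[|A ⁻¹' {true}]) {ω | h (g (X ω)) ≠ (if Y ω then (1 : ℝ) else 0)}).toReal ≥
      |((P[|A ⁻¹' {false}]) (Y ⁻¹' {true})).toReal -
        ((P[|A ⁻¹' {true}]) (Y ⁻¹' {true})).toReal| -
        (C : ℝ) * W1 (((P[|A ⁻¹' {false}]).map X).map g) (((P[|A ⁻¹' {true}]).map X).map g)
    ∧
    |((P[|A ⁻¹' {false}]) (Y ⁻¹' {true})).toReal -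
        ((P[|A ⁻¹' {true}]) (Y ⁻¹' {true})).toReal| -
        (C : ℝ) * W1 (((P[|A ⁻¹' {false}]).map X).map g) (((P[|A ⁻¹' {true}]).map X).map g) ≥
      |((P[|A ⁻¹' {false}]) (Y ⁻¹' {true})).toReal -
        ((P[|A ⁻¹' {true}]) (Y ⁻¹' {true})).toReal| -
        2 * R * (C : ℝ) *
          advAll (((P[|A ⁻¹' {false}]).map X).map g) (((P[|A ⁻¹' {true}]).map X).map g) :=
  tradeoff_lower_bound_general P X A Y hX hY hA0 hA1 g hg R hR C h hh hh01
end

section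
/- Let A be a random variable taking values in {0,1} and let Z be a random variable taking values in a countable set S, defined on the same probability space. Let H := H(A | Z) denote the base-2 conditional Shannon entropy of A given Z, and assume H > 0. Then for every function f : S → {0,1}, Pr( f(Z) ≠ A ) ≥ H / ( 2 · log₂(6 / H) ). -/
/-!
Let `E = {f(Z) ≠ A}`, `c = P(E)`, `p_s = P(Z = s)` and `e_s = P(Z = s, A ≠ f s)`. Given `Z = s`,
`A` has natural-log entropy `h(e_s / p_s)`, and the tangent bound `h(m) ≤ c - m log c` (valid for
every `c > 0`), weighted by `p_s` and summed, gives `H log 2 ≤ c (1 - log c)`. Since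
`√c (1 - log c) ≤ 2 / √e`, this forces `e H² ≤ 36 c`, i.e. `1 - log c ≤ 2 log (6 / H)`, and
substituting back yields `c ≥ H log 2 / (2 log (6 / H))`.
-/

open MeasureTheory ProbabilityTheory

/-- The base-2 conditional Shannon entropy `H(A | Z)` of a binary random variable `A`
given a discrete random variable `Z`:
`H(A | Z) = Σ_s Pr(Z = s) · Σ_b (- Pr(A = b | Z = s) · log₂ Pr(A = b | Z = s))`.
(The convention `0 · log₂ 0 = 0` is automatic since `Real.logb 2 0 = 0`.) -/
noncomputable def condEnt {Ω S : Type*} [MeasurableSpace Ω] (P : Measure Ω)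
    (A : Ω → Bool) (Z : Ω → S) : ℝ :=
  ∑' s : S, (P (Z ⁻¹' {s})).toReal *
    ∑' b : Bool, -(((P[|Z ⁻¹' {s}]) (A ⁻¹' {b})).toReal *
      Real.logb 2 (((P[|Z ⁻¹' {s}]) (A ⁻¹' {b})).toReal))

open Real

namespace Real

lemma mul_one_sub_log_le_one {x : ℝ} (hx : 0 ≤ x) : x * (1 - log x) ≤ 1 := by
  rcases hx.eq_or_lt with rfl | hx
  · simp
  · calc x * (1 - log x) ≤ x * x⁻¹ := by gcongr; linarith [one_sub_inv_le_log_of_pos hx]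
      _ = 1 := mul_inv_cancel₀ hx.ne'

lemma binEntropy_le_sub_mul_log {m c : ℝ} (hm₀ : 0 ≤ m) (hm₁ : m ≤ 1) (hc : 0 < c) :
    binEntropy m ≤ c - m * log c := by
  have h₁ : negMulLog (1 - m) ≤ m := by
    rw [negMulLog]; nlinarith [mul_one_sub_log_le_one (sub_nonneg.2 hm₁)]
  have h₂ : negMulLog m ≤ c - m - m * log c := by
    rcases hm₀.eq_or_lt with rfl | hm
    · simpa using hc.le
    · have h := mul_one_sub_log_le_one (div_nonneg hm₀ hc.le)
      rw [log_div hm.ne' hc.ne', div_mul_eq_mul_div, div_le_one hc] at h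
      rw [negMulLog]; linarith
  rw [binEntropy_eq_negMulLog_add_negMulLog_one_sub]
  linarith

lemma mul_binEntropy_div_le {p e c : ℝ} (he₀ : 0 ≤ e) (hep : e ≤ p) (hec : e ≤ c) :
    p * binEntropy (e / p) ≤ c * p - e * log c := by
  rcases he₀.eq_or_lt with rfl | he
  · simpa using mul_nonneg hec hep
  · have hp : 0 < p := he.trans_le hep
    calc p * binEntropy (e / p) ≤ p * (c - e / p * log c) := by
          gcongr
          exact binEntropy_le_sub_mul_log (by positivity) (div_le_one_of_le₀ hep hp.le)
            (he.trans_le hec)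
      _ = c * p - e * log c := by field_simp

-- The maximum is attained at `c = e⁻¹`.
lemma sqrt_mul_one_sub_log_le {c : ℝ} (hc : 0 ≤ c) : √c * (1 - log c) ≤ 2 / √(exp 1) := by
  rcases hc.eq_or_lt with rfl | hc
  · simp only [sqrt_zero, zero_mul]; positivity
  · have he : 0 < √(exp 1) := sqrt_pos.2 (exp_pos 1)
    have h := mul_one_sub_log_le_one (mul_nonneg (sqrt_nonneg c) he.le)
    rw [log_mul (sqrt_pos.2 hc).ne' he.ne', log_sqrt hc.le, log_sqrt (exp_pos 1).le,
      log_exp] at h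
    rw [le_div_iff₀ he]
    linarith

lemma div_two_mul_logb_le_of_mul_log_two_le {H c : ℝ} (hH : 0 < H) (hc : 0 ≤ c)
    (h : H * log 2 ≤ c * (1 - log c)) : H / (2 * logb 2 (6 / H)) ≤ c := by
  have hlog2 : 0 < log 2 := log_pos one_lt_two
  have hsq : exp 1 * H ^ 2 ≤ 36 * c := by
    have h₁ : H * log 2 ≤ √c * (2 / √(exp 1)) :=
      calc H * log 2 ≤ √c * (√c * (1 - log c)) := by rwa [← mul_assoc, mul_self_sqrt hc]
        _ ≤ √c * (2 / √(exp 1)) := by gcongr; exact sqrt_mul_one_sub_log_le hc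
    have h₂ : (H * log 2) ^ 2 ≤ 4 * c / exp 1 :=
      calc (H * log 2) ^ 2 ≤ (√c * (2 / √(exp 1))) ^ 2 := by gcongr
        _ = 4 * c / exp 1 := by rw [mul_pow, div_pow, sq_sqrt hc, sq_sqrt (exp_pos 1).le]; ring
    rw [le_div_iff₀ (exp_pos 1)] at h₂
    have h₃ : (H / 3) ^ 2 ≤ (H * log 2) ^ 2 := by
      gcongr
      nlinarith [log_two_gt_d9]
    nlinarith [mul_le_mul_of_nonneg_left h₃ (exp_pos 1).le]
  have hc : 0 < c := by nlinarith [mul_pos (exp_pos 1) (pow_pos hH 2)]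
  have hlog : 1 - log c ≤ 2 * log (6 / H) := by
    have h₁ : exp 1 / c ≤ (6 / H) ^ 2 := by
      rw [div_pow, div_le_div_iff₀ hc (by positivity)]
      linarith
    have h₂ := log_le_log (by positivity) h₁
    rwa [log_div (exp_pos 1).ne' hc.ne', log_exp, log_pow, Nat.cast_ofNat] at h₂
  have hkey : H * log 2 ≤ c * (2 * log (6 / H)) := h.trans (by gcongr)
  have hlog6 : 0 < log (6 / H) := by nlinarith
  rw [logb, div_le_iff₀ (by positivity)]
  field_simp
  linarith

end Real

section

variable {Ω S : Type*} [MeasurableSpace Ω] [MeasurableSpace S] [MeasurableSingletonClass S]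

lemma hasSum_measure_preimage_singleton_toReal [Countable S] (μ : Measure Ω) [IsFiniteMeasure μ]
    {Z : Ω → S} (hZ : Measurable Z) :
    HasSum (fun s => (μ (Z ⁻¹' {s})).toReal) (μ Set.univ).toReal := by
  have h : ∑' s, μ (Z ⁻¹' {s}) = μ Set.univ := by
    rw [← measure_iUnion (fun s t hst => Disjoint.preimage Z (by simpa using hst))
      (fun s => hZ (measurableSet_singleton s)), ← Set.preimage_iUnion, Set.iUnion_of_singleton,
      Set.preimage_univ]
  have := ENNReal.hasSum_toReal (h.symm ▸ measure_ne_top μ Set.univ)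
  rwa [← ENNReal.tsum_toReal_eq (fun _ => measure_ne_top μ _), h] at this

lemma tsum_neg_mul_logb_eq_binEntropy (ν : Measure Ω) [IsZeroOrProbabilityMeasure ν]
    {A : Ω → Bool} (hA : Measurable A) (b : Bool) :
    ∑' b' : Bool, -((ν (A ⁻¹' {b'})).toReal * logb 2 (ν (A ⁻¹' {b'})).toReal) =
      binEntropy (ν (A ⁻¹' {b})).toReal / log 2 := by
  rcases eq_zero_or_isProbabilityMeasure ν with rfl | _
  · simp
  have hcompl : (ν (A ⁻¹' {!b})).toReal = 1 - (ν (A ⁻¹' {b})).toReal := by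
    rw [← measureReal_def, ← measureReal_def,
      ← probReal_compl_eq_one_sub (hA (measurableSet_singleton b))]
    congr 1
    ext ω
    cases b <;> simp
  cases b <;> simp only [Bool.not_true, Bool.not_false] at hcompl <;>
    rw [tsum_bool, hcompl, binEntropy, logb, logb, log_inv, log_inv] <;> ring

lemma condEnt_eq_tsum_mul_binEntropy (P : Measure Ω) {A : Ω → Bool} {Z : Ω → S}
    (hA : Measurable A) (hZ : Measurable Z) (g : S → Bool) :
    condEnt P A Z = (∑' s, (P (Z ⁻¹' {s})).toReal *
      binEntropy ((P (Z ⁻¹' {s} ∩ A ⁻¹' {g s})).toReal / (P (Z ⁻¹' {s})).toReal)) / log 2 := by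
  rw [condEnt, ← tsum_div_const]
  congr 1 with s
  rw [tsum_neg_mul_logb_eq_binEntropy _ hA (g s), cond_apply (hZ (measurableSet_singleton s)),
    ENNReal.toReal_mul, ENNReal.toReal_inv, inv_mul_eq_div, mul_div_assoc]

lemma condEnt_mul_log_two_le [Countable S] (P : Measure Ω) [IsProbabilityMeasure P]
    {A : Ω → Bool} {Z : Ω → S} (hA : Measurable A) (hZ : Measurable Z) (f : S → Bool) :
    condEnt P A Z * log 2 ≤
      (P {ω | f (Z ω) ≠ A ω}).toReal * (1 - log (P {ω | f (Z ω) ≠ A ω}).toReal) := by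
  set E := {ω | f (Z ω) ≠ A ω}
  set c := (P E).toReal
  set p := fun s => (P (Z ⁻¹' {s})).toReal
  set e := fun s => (P (Z ⁻¹' {s} ∩ A ⁻¹' {!f s})).toReal
  have hfiber : ∀ s, Z ⁻¹' {s} ∩ A ⁻¹' {!f s} = Z ⁻¹' {s} ∩ E := by
    intro s
    ext ω
    simp +contextual [E, Bool.eq_not_iff, ne_comm]
  have hp : HasSum p 1 := by simpa using hasSum_measure_preimage_singleton_toReal P hZ
  have he : HasSum e c := by
    have h := hasSum_measure_preimage_singleton_toReal (P.restrict E) hZ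
    simp only [Measure.restrict_apply (hZ (measurableSet_singleton _)),
      Measure.restrict_apply_univ, ← hfiber] at h
    exact h
  have hep : ∀ s, e s ≤ p s := fun s =>
    ENNReal.toReal_mono (measure_ne_top P _) (measure_mono Set.inter_subset_left)
  have hec : ∀ s, e s ≤ c := fun s => by
    simp only [e, hfiber]
    exact ENNReal.toReal_mono (measure_ne_top P _) (measure_mono Set.inter_subset_right)
  have hbound : ∀ s, p s * binEntropy (e s / p s) ≤ c * p s - e s * log c := fun s =>
    mul_binEntropy_div_le ENNReal.toReal_nonneg (hep s) (hec s)
  have hR : HasSum (fun s => c * p s - e s * log c) (c * 1 - c * log c) :=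
    (hp.mul_left c).sub (he.mul_right (log c))
  have hL : Summable fun s => p s * binEntropy (e s / p s) :=
    Summable.of_nonneg_of_le (fun s => mul_nonneg ENNReal.toReal_nonneg <| binEntropy_nonneg
      (div_nonneg ENNReal.toReal_nonneg ENNReal.toReal_nonneg)
      (div_le_one_of_le₀ (hep s) ENNReal.toReal_nonneg)) hbound hR.summable
  rw [condEnt_eq_tsum_mul_binEntropy P hA hZ (fun s => !f s),
    div_mul_cancel₀ _ (log_pos one_lt_two).ne']
  linarith [hasSum_le hbound hL.hasSum hR]

end

/-- (Fano-type bound; first part of Theorem 3.4 of the paper.)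
If `A` is a binary random variable, `Z` takes values in a countable set `S`, and
`H := H(A | Z) > 0`, then every adversary `f : S → {0,1}` satisfies
`Pr(f(Z) ≠ A) ≥ H / (2 · log₂(6 / H))`. -/
theorem inference_error_lower_bound {Ω S : Type*} [MeasurableSpace Ω]
    [MeasurableSpace S] [MeasurableSingletonClass S] [Countable S]
    (P : Measure Ω) [IsProbabilityMeasure P]
    (A : Ω → Bool) (Z : Ω → S) (hA : Measurable A) (hZ : Measurable Z)
    (hH : 0 < condEnt P A Z) (f : S → Bool) :
    (P {ω | f (Z ω) ≠ A ω}).toReal ≥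
      condEnt P A Z / (2 * Real.logb 2 (6 / condEnt P A Z)) :=
  div_two_mul_logb_le_of_mul_log_two_le hH ENNReal.toReal_nonneg
    (condEnt_mul_log_two_le P hA hZ f)
end

section
/- Let A be a random variable taking values in {0,1} and let Z be a random variable taking values in a metric space Ω, defined on the same probability space, with 0 < Pr(A = 0) < 1. Set α := Pr(A = 0) and let W1* := W1(law of Z given A = 0, law of Z given A = 1). Then for every C-Lipschitz function f : Ω → ℝ taking values in {0,1}, Pr( f(Z) ≠ A ) ≥ min{α, 1−α} · ( 1 − C · W1* ). -/
/-!
Condition on `A`: writing `μ_b` for the law of `Z` given `A = b`, the error probability is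
`α μ₀{f ≠ 0} + (1 - α) μ₁{f ≠ 1} ≥ min(α, 1 - α) (μ₀{f ≠ 0} + μ₁{f ≠ 1})`. Since `f` is
`{0,1}`-valued, the bracket equals `1 - (∫ f dμ₁ - ∫ f dμ₀)`, and `f / C` is 1-Lipschitz, so the
dual formula bounds the difference of integrals by `C W1*`. The first moment of `Z` is what makes
the family under the supremum defining `W1` bounded above, so that the supremum is not the junk
value `0`.
-/

open MeasureTheory ProbabilityTheory
open scoped NNReal

open Set

theorem min_mul_add_le_mul_add_mul {α : Type*} [Semiring α] [LinearOrder α] [IsOrderedRing α]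
    (a b : α) {p q : α} (hp : 0 ≤ p) (hq : 0 ≤ q) : min a b * (p + q) ≤ a * p + b * q := by
  rw [mul_add]
  exact add_le_add (mul_le_mul_of_nonneg_right (min_le_left a b) hp)
    (mul_le_mul_of_nonneg_right (min_le_right a b) hq)

section BinaryValued

variable {X : Type*} [MeasurableSpace X] {f : X → ℝ}

theorem measurableSet_setOf_ne (hf : Measurable f) (c : ℝ) : MeasurableSet {x | f x ≠ c} :=
  (hf (measurableSet_singleton c)).compl

theorem measureReal_setOf_ne_zero_eq_integral (hf : Measurable f)
    (h01 : ∀ x, f x = 0 ∨ f x = 1) (μ : Measure X) : μ.real {x | f x ≠ 0} = ∫ x, f x ∂μ := by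
  have hind : f = {x | f x ≠ 0}.indicator 1 := by
    funext x
    rcases h01 x with h | h <;> simp [h]
  conv_rhs => rw [hind]
  exact (integral_indicator_one (measurableSet_setOf_ne hf 0)).symm

theorem measureReal_setOf_ne_one_eq_one_sub_integral (hf : Measurable f)
    (h01 : ∀ x, f x = 0 ∨ f x = 1) (μ : Measure X) [IsProbabilityMeasure μ] :
    μ.real {x | f x ≠ 1} = 1 - ∫ x, f x ∂μ := by
  have hcompl : {x | f x ≠ 1} = {x | f x ≠ 0}ᶜ := by
    ext x
    rcases h01 x with h | h <;> simp [h]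
  rw [hcompl, probReal_compl_eq_one_sub (measurableSet_setOf_ne hf 0),
    measureReal_setOf_ne_zero_eq_integral hf h01]

end BinaryValued

section Wasserstein

variable {X : Type*} [PseudoMetricSpace X] [MeasurableSpace X] [OpensMeasurableSpace X]
  {μ ν : Measure X} {x₀ : X}

theorem LipschitzWith.integrable_of_integrable_dist [IsFiniteMeasure μ] {K : ℝ≥0} {φ : X → ℝ}
    (hφ : LipschitzWith K φ) (hd : Integrable (fun x => dist x x₀) μ) : Integrable φ μ := by
  refine ((hd.const_mul K).add (integrable_const |φ x₀|)).mono'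
    hφ.continuous.aestronglyMeasurable (ae_of_all _ fun x => ?_)
  have hx : |φ x - φ x₀| ≤ K * dist x x₀ := by simpa [Real.dist_eq] using hφ.dist_le_mul x x₀
  show |φ x| ≤ K * dist x x₀ + |φ x₀|
  linarith [abs_sub_abs_le_abs_sub (φ x) (φ x₀)]

theorem LipschitzWith.abs_integral_sub_le_integral_dist [IsProbabilityMeasure μ] {φ : X → ℝ}
    (hφ : LipschitzWith 1 φ) (hd : Integrable (fun x => dist x x₀) μ) :
    |∫ x, φ x ∂μ - φ x₀| ≤ ∫ x, dist x x₀ ∂μ := by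
  have hφμ := hφ.integrable_of_integrable_dist hd
  calc |∫ x, φ x ∂μ - φ x₀| = |∫ x, (φ x - φ x₀) ∂μ| := by
        rw [integral_sub hφμ (integrable_const _), integral_const, probReal_univ, one_smul]
    _ ≤ ∫ x, |φ x - φ x₀| ∂μ := abs_integral_le_integral_abs
    _ ≤ ∫ x, dist x x₀ ∂μ := integral_mono (hφμ.sub (integrable_const _)).abs hd fun x => by
        simpa [Real.dist_eq] using hφ.dist_le_mul x x₀

theorem bddAbove_W1_s7 [IsProbabilityMeasure μ] [IsProbabilityMeasure ν]
    (hμ : Integrable (fun x => dist x x₀) μ) (hν : Integrable (fun x => dist x x₀) ν) :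
    BddAbove (range fun φ : {φ : X → ℝ // LipschitzWith 1 φ} =>
      |∫ x, φ.1 x ∂μ - ∫ x, φ.1 x ∂ν|) := by
  refine ⟨(∫ x, dist x x₀ ∂μ) + ∫ x, dist x x₀ ∂ν, ?_⟩
  rintro _ ⟨⟨φ, hφ⟩, rfl⟩
  calc |∫ x, φ x ∂μ - ∫ x, φ x ∂ν|
      ≤ |∫ x, φ x ∂μ - φ x₀| + |∫ x, φ x ∂ν - φ x₀| := by
        rw [abs_sub_comm (∫ x, φ x ∂ν)]
        exact abs_sub_le _ _ _
    _ ≤ _ := add_le_add (hφ.abs_integral_sub_le_integral_dist hμ)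
        (hφ.abs_integral_sub_le_integral_dist hν)

theorem LipschitzWith.abs_integral_sub_integral_le_mul_W1 [IsProbabilityMeasure μ]
    [IsProbabilityMeasure ν] {K : ℝ≥0} {f : X → ℝ} (hf : LipschitzWith K f)
    (hμ : Integrable (fun x => dist x x₀) μ) (hν : Integrable (fun x => dist x x₀) ν) :
    |∫ x, f x ∂μ - ∫ x, f x ∂ν| ≤ K * W1 μ ν := by
  rcases eq_or_ne K 0 with rfl | hK
  · have hconst : f = fun _ => f x₀ := funext fun x => by simpa using hf.dist_le_mul x x₀
    rw [hconst]
    simp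
  have hK' : (0 : ℝ) < K := by positivity
  have hg : LipschitzWith 1 fun x => (K : ℝ)⁻¹ * f x := by
    simpa [hK, abs_of_pos hK', Function.comp_def] using (lipschitzWith_smul (K : ℝ)⁻¹).comp hf
  have h := le_ciSup (bddAbove_W1_s7 hμ hν) ⟨_, hg⟩
  simp only [integral_const_mul, ← mul_sub, abs_mul, abs_inv, abs_of_pos hK'] at h
  rwa [inv_mul_le_iff₀ hK'] at h

theorem LipschitzWith.one_sub_mul_W1_le_measureReal_ne_zero_add_ne_one [IsProbabilityMeasure μ]
    [IsProbabilityMeasure ν] {K : ℝ≥0} {f : X → ℝ} (hf : LipschitzWith K f)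
    (h01 : ∀ x, f x = 0 ∨ f x = 1)
    (hμ : Integrable (fun x => dist x x₀) μ) (hν : Integrable (fun x => dist x x₀) ν) :
    1 - K * W1 μ ν ≤ μ.real {x | f x ≠ 0} + ν.real {x | f x ≠ 1} := by
  rw [measureReal_setOf_ne_zero_eq_integral hf.continuous.measurable h01,
    measureReal_setOf_ne_one_eq_one_sub_integral hf.continuous.measurable h01]
  linarith [neg_abs_le (∫ x, f x ∂μ - ∫ x, f x ∂ν), hf.abs_integral_sub_integral_le_mul_W1 hμ hν]

end Wasserstein

section ConditionalLaw

variable {Ω X : Type*} [MeasurableSpace Ω] [MeasurableSpace X] {P : Measure Ω} {Z : Ω → X}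

theorem integrable_map_cond (hZ : Measurable Z) {s : Set Ω} (hs : P s ≠ 0) {g : X → ℝ}
    (hg : AEStronglyMeasurable g ((P[|s]).map Z)) (hgZ : Integrable (fun ω => g (Z ω)) P) :
    Integrable g ((P[|s]).map Z) :=
  (integrable_map_measure hg hZ.aemeasurable).mpr <|
    hgZ.restrict.smul_measure (ENNReal.inv_ne_top.mpr hs)

theorem measureReal_setOf_mem_eq_add [IsFiniteMeasure P] {A : Ω → Bool} (hA : Measurable A)
    (hZ : Measurable Z) {s : Bool → Set X} (hs : ∀ b, MeasurableSet (s b)) :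
    P.real {ω | Z ω ∈ s (A ω)} =
      P.real (A ⁻¹' {false}) * ((P[|A ⁻¹' {false}]).map Z).real (s false) +
        P.real (A ⁻¹' {true}) * ((P[|A ⁻¹' {true}]).map Z).real (s true) := by
  have hfiber : ∀ b, (P[|A ⁻¹' {b}]).map Z (s b) = P[{ω | Z ω ∈ s (A ω)} | A ⁻¹' {b}] := by
    intro b
    rw [Measure.map_apply hZ (hs b), ← cond_inter_self (hA (measurableSet_singleton b)),
      ← cond_inter_self (hA (measurableSet_singleton b)) {ω | Z ω ∈ s (A ω)}]
    congr 1
    ext ω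
    simp only [mem_inter_iff, mem_preimage, mem_singleton_iff, mem_ofPred_eq]
    exact and_congr_right fun h => by rw [h]
  have hcompl : A ⁻¹' {true} = (A ⁻¹' {false})ᶜ := by ext; simp
  simp only [measureReal_def, ← ENNReal.toReal_mul, mul_comm (P _)]
  rw [← ENNReal.toReal_add (by finiteness) (by finiteness), hfiber, hfiber, hcompl,
    cond_add_cond_compl_eq (hA (measurableSet_singleton false))]

end ConditionalLaw

theorem lipschitz_adversary_error_lower_bound_general {Ω Ω' : Type*} [MeasurableSpace Ω]
    [MetricSpace Ω'] [MeasurableSpace Ω'] [BorelSpace Ω']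
    (P : Measure Ω) [IsProbabilityMeasure P]
    (A : Ω → Bool) (Z : Ω → Ω') (hA : Measurable A) (hZ : Measurable Z)
    (hmom : ∃ z₀ : Ω', Integrable (fun ω => dist (Z ω) z₀) P)
    (C : ℝ≥0) (f : Ω' → ℝ) (hf : LipschitzWith C f)
    (hf01 : ∀ x, f x = 0 ∨ f x = 1) :
    (P {ω | f (Z ω) ≠ (if A ω then (1 : ℝ) else 0)}).toReal ≥
      min (P (A ⁻¹' {false})).toReal (1 - (P (A ⁻¹' {false})).toReal) *
        (1 - (C : ℝ) * W1 ((P[|A ⁻¹' {false}]).map Z) ((P[|A ⁻¹' {true}]).map Z)) := by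
  obtain ⟨z₀, hmom⟩ := hmom
  have hT : P.real (A ⁻¹' {true}) = 1 - P.real (A ⁻¹' {false}) := by
    rw [← probReal_compl_eq_one_sub (hA (measurableSet_singleton false))]
    congr 1
    ext
    simp
  have herr := measureReal_setOf_mem_eq_add (P := P) hA hZ
    (s := fun b => {x | f x ≠ if b then 1 else 0})
    fun b => measurableSet_setOf_ne hf.continuous.measurable _
  simp only [Bool.false_eq_true, if_false, if_true, hT] at herr
  simp only [← measureReal_def, ge_iff_le]
  refine le_trans ?_
    ((min_mul_add_le_mul_add_mul _ _ measureReal_nonneg measureReal_nonneg).trans_eq herr.symm)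
  -- If `A` is almost surely constant, the factor `min α (1 - α)` vanishes.
  rcases eq_or_ne (P (A ⁻¹' {false})) 0 with h0 | h0
  · simp [measureReal_def, h0]
  rcases eq_or_ne (P (A ⁻¹' {true})) 0 with h1 | h1
  · have hα : P.real (A ⁻¹' {false}) = 1 := by
      linarith [show P.real (A ⁻¹' {true}) = 0 by simp [measureReal_def, h1]]
    simp [hα]
  have := cond_isProbabilityMeasure h0
  have := cond_isProbabilityMeasure h1
  have := Measure.isProbabilityMeasure_map (μ := P[|A ⁻¹' {false}]) hZ.aemeasurable
  have := Measure.isProbabilityMeasure_map (μ := P[|A ⁻¹' {true}]) hZ.aemeasurable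
  exact mul_le_mul_of_nonneg_left
    (hf.one_sub_mul_W1_le_measureReal_ne_zero_add_ne_one hf01
      (integrable_map_cond hZ h0 (by fun_prop) hmom) (integrable_map_cond hZ h1 (by fun_prop) hmom))
    (le_min measureReal_nonneg (by simp [← hT]))

/-- (Second part of Theorem 3.4 of the paper.) Let `A` be binary
with `α = Pr(A = 0) ∈ (0, 1)`, let `Z` take values in a metric space (with a finite
first moment so that the Wasserstein integrals exist), and let
`W1* = W1(law(Z | A = 0), law(Z | A = 1))`. Then every `C`-Lipschitz adversary
`f` taking values in `{0, 1}` satisfies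
`Pr(f(Z) ≠ A) ≥ min{α, 1-α} · (1 - C · W1*)`. -/
theorem lipschitz_adversary_error_lower_bound {Ω Ω' : Type*} [MeasurableSpace Ω]
    [MetricSpace Ω'] [MeasurableSpace Ω'] [BorelSpace Ω']
    (P : Measure Ω) [IsProbabilityMeasure P]
    (A : Ω → Bool) (Z : Ω → Ω') (hA : Measurable A) (hZ : Measurable Z)
    (hA0 : 0 < P (A ⁻¹' {false})) (hA1 : P (A ⁻¹' {false}) < 1)
    (hmom : ∃ z₀ : Ω', Integrable (fun ω => dist (Z ω) z₀) P)
    (C : ℝ≥0) (f : Ω' → ℝ) (hf : LipschitzWith C f)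
    (hf01 : ∀ x, f x = 0 ∨ f x = 1) :
    (P {ω | f (Z ω) ≠ (if A ω then (1 : ℝ) else 0)}).toReal ≥
      min (P (A ⁻¹' {false})).toReal (1 - (P (A ⁻¹' {false})).toReal) *
        (1 - (C : ℝ) * W1 ((P[|A ⁻¹' {false}]).map Z) ((P[|A ⁻¹' {true}]).map Z)) :=
  lipschitz_adversary_error_lower_bound_general P A Z hA hZ hmom C f hf hf01
end
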